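/- arXiv:2305.15101 — 6 statements merged into one kernel-verified Lean document; each statement's English description precedes it below -/
import Mathlib

section
/- Let X be a discrete random variable with values in {x_1,...,x_N}, and let A ≥ 16 be such that P[X = x_i] ≥ 1/A for all i ∈ [N]. Let J ⊆ {x_1,...,x_N} and let E be the event that X ∈ J. Suppose P[E] ≥ 1 - a for some 0 ≤ a ≤ 1/2. Then H(X) - H(X | E) ≤ 2a·log₂ A. -/
/-!
With `q = P[E]`, `S = ∑_{i ∈ J} pᵢ log₂ pᵢ` and `C = ∑_{i ∉ J} pᵢ log₂ pᵢ`, one has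
`H(X) - H(X | E) = (S / q - S) - C - log₂ q`. The first term is nonpositive because `S ≤ 0` and
`q ≤ 1`; the lower bound `pᵢ ≥ 1/A` gives `-C ≤ (1 - q) log₂ A ≤ a log₂ A`; and
`-log₂ q ≤ -log₂ (1 - a) ≤ 4a ≤ a log₂ A`, the last step being where `A ≥ 16` enters.
-/

open Finset Real

lemma neg_log_one_sub_le {a : ℝ} (ha0 : 0 ≤ a) (ha : a ≤ 1 / 2) : -log (1 - a) ≤ 2 * a := by
  have hpos : 0 < 1 - a := by linarith
  have hinv : (1 - a)⁻¹ ≤ 1 + 2 * a := by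
    rw [inv_le_iff_one_le_mul₀ hpos]
    nlinarith
  linarith [one_sub_inv_le_log_of_pos hpos]

lemma neg_logb_two_one_sub_le {a : ℝ} (ha0 : 0 ≤ a) (ha : a ≤ 1 / 2) :
    -logb 2 (1 - a) ≤ 4 * a := by
  have hlog2 : 1 / 2 < log 2 := by linarith [log_two_gt_d9]
  rw [logb, ← neg_div, div_le_iff₀ (by linarith)]
  nlinarith [neg_log_one_sub_le ha0 ha]

lemma four_le_logb_two {A : ℝ} (hA : 16 ≤ A) : 4 ≤ logb 2 A := by
  rw [le_logb_iff_rpow_le one_lt_two (by linarith)]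
  norm_num [hA]

lemma mul_logb_nonpos {b x : ℝ} (hb : 1 < b) (hx0 : 0 ≤ x) (hx1 : x ≤ 1) : x * logb b x ≤ 0 :=
  mul_nonpos_of_nonneg_of_nonpos hx0 (logb_nonpos hb hx0 hx1)

lemma neg_mul_logb_le_mul_logb {b x A : ℝ} (hb : 1 < b) (hA : 0 < A) (hx : A⁻¹ ≤ x) :
    -(x * logb b x) ≤ x * logb b A := by
  have h : -logb b A ≤ logb b x := by
    rw [← logb_inv]
    exact logb_le_logb_of_le hb (by positivity) hx
  nlinarith [(inv_pos.2 hA).trans_le hx]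

lemma neg_sum_mul_logb_le {ι : Type*} {b A : ℝ} (hb : 1 < b) (hA : 0 < A) (p : ι → ℝ)
    (s : Finset ι) (hp : ∀ i ∈ s, A⁻¹ ≤ p i) :
    -∑ i ∈ s, p i * logb b (p i) ≤ (∑ i ∈ s, p i) * logb b A := by
  rw [← sum_neg_distrib, sum_mul]
  exact sum_le_sum fun i hi => neg_mul_logb_le_mul_logb hb hA (hp i hi)

lemma div_mul_logb_div (b x q : ℝ) (hq : q ≠ 0) :
    x / q * logb b (x / q) = x * logb b x / q - logb b q * x / q := by
  rcases eq_or_ne x 0 with rfl | hx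
  · simp
  · rw [logb_div hx hq]
    ring

lemma sum_normalized_mul_logb {ι : Type*} [Fintype ι] [DecidableEq ι] (b : ℝ) (p : ι → ℝ)
    (J : Finset ι) (hJ : ∑ j ∈ J, p j ≠ 0) :
    ∑ i, (if i ∈ J then p i / ∑ j ∈ J, p j else 0) *
        logb b (if i ∈ J then p i / ∑ j ∈ J, p j else 0) =
      (∑ i ∈ J, p i * logb b (p i)) / ∑ j ∈ J, p j - logb b (∑ j ∈ J, p j) := by
  set q := ∑ j ∈ J, p j
  have hterm : ∀ i, (if i ∈ J then p i / q else 0) * logb b (if i ∈ J then p i / q else 0) =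
      if i ∈ J then p i * logb b (p i) / q - logb b q * p i / q else 0 := by
    intro i
    split_ifs
    · exact div_mul_logb_div b (p i) q hJ
    · simp
  simp only [hterm, sum_ite_mem, univ_inter, sum_sub_distrib, ← sum_div, ← mul_sum]
  rw [mul_div_assoc, div_self hJ, mul_one]

/-- If `X` is a discrete random variable with outcomes `x_1, …, x_N` each of probability
at least `1/A` (with `A ≥ 16`), `E` is the event that `X ∈ J`, and `P[E] ≥ 1 - a` for some
`0 ≤ a ≤ 1/2`, then `H(X) - H(X | E) ≤ 2 a log₂ A`.  Here `p i` is the probability of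
outcome `x_i`, so the conditional probabilities given `E` are `p i / P[E]` for `i ∈ J`
and `0` otherwise, and entropy is `H = -∑ p_i log₂ p_i`. -/
theorem entropy_cond_event_ge {N : ℕ} (p : Fin N → ℝ) (A : ℝ) (hA : 16 ≤ A)
    (hp : ∀ i, 1 / A ≤ p i) (hsum : ∑ i, p i = 1)
    (J : Finset (Fin N)) (a : ℝ) (ha0 : 0 ≤ a) (ha : a ≤ 1 / 2)
    (hE : 1 - a ≤ ∑ i ∈ J, p i) :
    (-∑ i, p i * Real.logb 2 (p i)) -
      (-∑ i, (if i ∈ J then p i / (∑ j ∈ J, p j) else 0) *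
          Real.logb 2 (if i ∈ J then p i / (∑ j ∈ J, p j) else 0)) ≤
      2 * a * Real.logb 2 A := by
  have hA0 : 0 < A := by linarith
  have hp0 : ∀ i, 0 ≤ p i := fun i => (one_div_pos.2 hA0).le.trans (hp i)
  set q := ∑ j ∈ J, p j
  have hq : q + ∑ i ∈ Jᶜ, p i = 1 := by rw [sum_add_sum_compl, hsum]
  have hq1 : q ≤ 1 := by linarith [sum_nonneg fun i (_ : i ∈ Jᶜ) => hp0 i]
  have hq0 : 0 < q := by linarith
  set S := ∑ i ∈ J, p i * logb 2 (p i)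
  have hS : S ≤ 0 := sum_nonpos fun i _ => mul_logb_nonpos one_lt_two (hp0 i)
    ((single_le_sum (fun j _ => hp0 j) (mem_univ i)).trans_eq hsum)
  have hSq : S / q ≤ S := by
    rw [div_le_iff₀ hq0]
    nlinarith
  have hlogA := four_le_logb_two hA
  have hC : -∑ i ∈ Jᶜ, p i * logb 2 (p i) ≤ a * logb 2 A :=
    (neg_sum_mul_logb_le one_lt_two hA0 p Jᶜ fun i _ => one_div A ▸ hp i).trans
      (by gcongr; linarith)
  have hlogq : -logb 2 q ≤ 4 * a :=
    (neg_le_neg (logb_le_logb_of_le one_lt_two (by linarith) hE)).trans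
      (neg_logb_two_one_sub_le ha0 ha)
  rw [← sum_add_sum_compl J, sum_normalized_mul_logb 2 p J hq0.ne']
  linarith [mul_le_mul_of_nonneg_left hlogA ha0]
end

section
/- Let G be a graph on 2n vertices and x a perfect fractional matching of G with h(x) ≥ n·log₂(n/2). Let b > 1 and M := {e ∈ E(G) : x_e ≥ b/n}. Then ∑_{e∈M} x_e ≤ 4n/log₂ b. -/
open Finset

lemma handshake_wt {V : Type*} [Fintype V] [DecidableEq V] (G : SimpleGraph V)
    [DecidableRel G.Adj] (x : Sym2 V → ℝ) :
    ∑ v, ∑ w ∈ G.neighborFinset v, x s(v, w) = 2 * ∑ e ∈ G.edgeFinset, x e := by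
  have h1 : ∑ d : G.Dart, x d.edge = ∑ v, ∑ w ∈ G.neighborFinset v, x s(v, w) := by
    rw [← Finset.sum_fiberwise_of_maps_to (g := fun d : G.Dart => d.fst)
      (fun d _ => Finset.mem_univ d.fst) (fun d => x d.edge)]
    refine Finset.sum_congr rfl fun v _ => ?_
    rw [G.dart_fst_fiber v,
      Finset.sum_image (fun a _ c _ h => G.dartOfNeighborSet_injective v h)]
    trans (∑ w : G.neighborSet v, x s(v, (w : V)))
    · exact Finset.sum_congr rfl (fun w _ => rfl)
    · exact (Finset.sum_subtype (G.neighborFinset v)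
        (fun w => G.mem_neighborFinset v w) (fun w => x s(v, w))).symm
  have h2 : ∑ d : G.Dart, x d.edge = ∑ e ∈ G.edgeFinset, 2 * x e := by
    rw [← Finset.sum_fiberwise_of_maps_to (g := fun d : G.Dart => d.edge)
      (fun d _ => (SimpleGraph.mem_edgeFinset).2 d.edge_mem) (fun d => x d.edge)]
    refine Finset.sum_congr rfl fun e he => ?_
    have hcard := G.dart_edge_fiber_card e ((SimpleGraph.mem_edgeFinset).1 he)
    calc ∑ d ∈ univ.filter (fun d : G.Dart => d.edge = e), x d.edge
        = ∑ d ∈ univ.filter (fun d : G.Dart => d.edge = e), x e :=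
          Finset.sum_congr rfl (fun d hd => by rw [(Finset.mem_filter.1 hd).2])
      _ = 2 * x e := by
          rw [Finset.sum_const, hcard, nsmul_eq_mul]; norm_num
  rw [← h1, h2, Finset.mul_sum]

lemma entropy_sum_le {ι : Type*} (s : Finset ι) (f : ι → ℝ) (hf : ∀ i ∈ s, 0 ≤ f i)
    (hS : 0 < ∑ i ∈ s, f i) :
    ∑ i ∈ s, f i * Real.logb 2 (1 / f i) ≤
      (∑ i ∈ s, f i) * Real.logb 2 ((s.card : ℝ) / (∑ i ∈ s, f i)) := by
  set S : ℝ := ∑ i ∈ s, f i with hSdef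
  have hne : s.Nonempty := by
    by_contra h
    rw [Finset.not_nonempty_iff_eq_empty] at h
    simp [hSdef, h] at hS
  have hcardpos : (0 : ℝ) < s.card := by exact_mod_cast Finset.card_pos.2 hne
  set c : ℝ := S / s.card with hcdef
  have hc : 0 < c := div_pos hS hcardpos
  have hlog2 : (0:ℝ) < Real.log 2 := Real.log_pos one_lt_two
  have key : ∀ i ∈ s, f i * Real.log (c / f i) ≤ c - f i := by
    intro i hi
    rcases (hf i hi).eq_or_lt with h0 | hpos
    · rw [← h0]; simpa using hc.le
    · have h1 : Real.log (c / f i) ≤ c / f i - 1 :=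
        Real.log_le_sub_one_of_pos (div_pos hc hpos)
      have := mul_le_mul_of_nonneg_left h1 hpos.le
      calc f i * Real.log (c / f i) ≤ f i * (c / f i - 1) := this
        _ = c - f i := by field_simp
  have hsum : ∑ i ∈ s, f i * Real.log (c / f i) ≤ 0 := by
    calc ∑ i ∈ s, f i * Real.log (c / f i) ≤ ∑ i ∈ s, (c - f i) :=
          Finset.sum_le_sum key
      _ = s.card * c - S := by rw [Finset.sum_sub_distrib, Finset.sum_const, nsmul_eq_mul]
      _ = 0 := by rw [hcdef, mul_div_assoc', mul_div_cancel_left₀ _ hcardpos.ne', sub_self]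
  have hsplit : ∀ i ∈ s, f i * Real.log (c / f i)
      = f i * Real.log c + f i * Real.log (1 / f i) := by
    intro i hi
    rcases (hf i hi).eq_or_lt with h0 | hpos
    · rw [← h0]; ring
    · rw [Real.log_div hc.ne' hpos.ne', Real.log_div one_ne_zero hpos.ne', Real.log_one]
      ring
  have hsum2 : ∑ i ∈ s, f i * Real.log (1 / f i) ≤ S * Real.log ((s.card : ℝ) / S) := by
    have e1 : ∑ i ∈ s, f i * Real.log (c / f i)
        = S * Real.log c + ∑ i ∈ s, f i * Real.log (1 / f i) := by
      rw [Finset.sum_congr rfl hsplit, Finset.sum_add_distrib, ← Finset.sum_mul]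
    have e2 : Real.log ((s.card : ℝ) / S) = - Real.log c := by
      rw [hcdef, ← Real.log_inv]
      congr 1
      field_simp
    rw [e2]
    nlinarith [hsum, e1]
  have conv : ∀ y : ℝ, Real.logb 2 y = Real.log y / Real.log 2 := fun y => rfl
  simp only [conv]
  calc ∑ i ∈ s, f i * (Real.log (1 / f i) / Real.log 2)
      = (∑ i ∈ s, f i * Real.log (1 / f i)) / Real.log 2 := by
        rw [Finset.sum_div]; exact Finset.sum_congr rfl fun i _ => by ring
    _ ≤ S * Real.log ((s.card : ℝ) / S) / Real.log 2 := by
        gcongr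
    _ = S * (Real.log ((s.card : ℝ) / S) / Real.log 2) := by ring

/-- Let `G` be a graph on `2n` vertices and `x` a perfect fractional matching of `G`
with entropy `h(x) ≥ n log₂ (n/2)`.  Then the edges of weight at least `b/n` (for `b > 1`)
carry total weight at most `4n / log₂ b`. -/
theorem weight_of_heavy_edges_le {V : Type*} [Fintype V] [DecidableEq V]
    (G : SimpleGraph V) [DecidableRel G.Adj]
    (n : ℕ) (hcard : Fintype.card V = 2 * n)
    (x : Sym2 V → ℝ) (hx0 : ∀ e, 0 ≤ x e)
    (hpfm : ∀ v : V, ∑ w ∈ G.neighborFinset v, x s(v, w) = 1)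
    (hent : (n : ℝ) * Real.logb 2 ((n : ℝ) / 2) ≤
      ∑ e ∈ G.edgeFinset, x e * Real.logb 2 (1 / x e))
    (b : ℝ) (hb : 1 < b) :
    ∑ e ∈ G.edgeFinset.filter (fun e => b / (n : ℝ) ≤ x e), x e ≤
      4 * (n : ℝ) / Real.logb 2 b := by
  have hlogb : 0 < Real.logb 2 b := Real.logb_pos one_lt_two hb
  have hlog2 : (0:ℝ) < Real.log 2 := Real.log_pos one_lt_two
  rcases Nat.eq_zero_or_pos n with hn0 | hn
  · subst hn0
    have hV : IsEmpty V := by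
      rw [← Fintype.card_eq_zero_iff]; omega
    have hE : G.edgeFinset = ∅ := Finset.eq_empty_of_isEmpty _
    rw [hE]
    simp
  -- main case
  have hnR : (0:ℝ) < n := by exact_mod_cast hn
  have hb0 : (0:ℝ) < b := lt_trans one_pos hb
  have htot : ∑ e ∈ G.edgeFinset, x e = n := by
    have h := handshake_wt G x
    have h2 : ∑ v : V, ∑ w ∈ G.neighborFinset v, x s(v, w) = (2*n : ℝ) := by
      rw [Finset.sum_congr rfl (fun v _ => hpfm v), Finset.sum_const, card_univ, hcard]
      push_cast; ring
    rw [h2] at h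
    linarith
  set H := G.edgeFinset.filter (fun e => b / (n:ℝ) ≤ x e) with hHdef
  set L := G.edgeFinset.filter (fun e => ¬ (b / (n:ℝ) ≤ x e)) with hLdef
  set W := ∑ e ∈ H, x e with hWdef
  set SL := ∑ e ∈ L, x e with hSLdef
  have hWSL : W + SL = n := by
    rw [hWdef, hSLdef, hHdef, hLdef, Finset.sum_filter_add_sum_filter_not, htot]
  have hW0 : 0 ≤ W := Finset.sum_nonneg fun e _ => hx0 e
  have hSL0 : 0 ≤ SL := Finset.sum_nonneg fun e _ => hx0 e
  have hsplitE : ∑ e ∈ G.edgeFinset, x e * Real.logb 2 (1/x e)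
      = (∑ e ∈ H, x e * Real.logb 2 (1/x e)) + ∑ e ∈ L, x e * Real.logb 2 (1/x e) := by
    rw [hHdef, hLdef, Finset.sum_filter_add_sum_filter_not]
  -- heavy bound
  have hheavy : ∑ e ∈ H, x e * Real.logb 2 (1/x e)
      ≤ W * Real.logb 2 (n:ℝ) - W * Real.logb 2 b := by
    have : W * Real.logb 2 (n:ℝ) - W * Real.logb 2 b
        = ∑ e ∈ H, x e * (Real.logb 2 (n:ℝ) - Real.logb 2 b) := by
      rw [← Finset.sum_mul, ← hWdef]; ring
    rw [this]
    apply Finset.sum_le_sum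
    intro e he
    have hxe : b / (n:ℝ) ≤ x e := (Finset.mem_filter.1 he).2
    have hxpos : 0 < x e := lt_of_lt_of_le (div_pos hb0 hnR) hxe
    have h1 : 1 / x e ≤ (n:ℝ) / b := by
      rw [div_le_div_iff₀ hxpos hb0, one_mul]
      rw [div_le_iff₀ hnR] at hxe
      linarith
    have h2 : Real.logb 2 (1 / x e) ≤ Real.logb 2 ((n:ℝ)/b) :=
      Real.logb_le_logb_of_le one_lt_two (by positivity) h1
    rw [Real.logb_div hnR.ne' hb0.ne'] at h2
    exact mul_le_mul_of_nonneg_left h2 hxpos.le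
  -- light bound
  have hlight : ∑ e ∈ L, x e * Real.logb 2 (1/x e)
      ≤ SL + 2 * (SL * Real.logb 2 (n:ℝ)) - SL * Real.logb 2 (n:ℝ)
        + ((n:ℝ) - SL)/Real.log 2 := by
    rcases hSL0.eq_or_lt with h0 | hpos
    · have hz : ∀ e ∈ L, x e = 0 := fun e he =>
        (Finset.sum_eq_zero_iff_of_nonneg (fun e _ => hx0 e)).1 h0.symm e he
      rw [Finset.sum_eq_zero (fun e he => by rw [hz e he]; ring), ← h0]
      have : (0:ℝ) ≤ ((n:ℝ) - 0)/Real.log 2 := div_nonneg (by simpa using hnR.le) hlog2.le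
      linarith
    · have hJ := entropy_sum_le L x (fun e _ => hx0 e) (by rw [← hSLdef]; exact hpos)
      rw [← hSLdef] at hJ
      have hLne : (0:ℝ) < L.card := by
        rcases Finset.eq_empty_or_nonempty L with h | h
        · rw [h] at hSLdef; simp [hSLdef] at hpos
        · exact_mod_cast Finset.card_pos.2 h
      have hcardle : (L.card : ℝ) ≤ 2*(n:ℝ)^2 := by
        have h1 : L.card ≤ G.edgeFinset.card := by
          rw [hLdef]; exact Finset.card_filter_le _ _
        have h2 : G.edgeFinset.card ≤ ((2*n : ℕ)).choose 2 := by
          rw [← hcard]; exact G.card_edgeFinset_le_card_choose_two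
        have h2R : (L.card : ℝ) ≤ (((2*n : ℕ)).choose 2 : ℝ) := by
          exact_mod_cast le_trans h1 h2
        have h3 : (((2*n : ℕ)).choose 2 : ℝ) = (2*(n:ℝ)) * (2*(n:ℝ) - 1) / 2 := by
          rw [Nat.cast_choose_two]; push_cast; ring
        rw [h3] at h2R
        nlinarith [hnR]
      have hmono : Real.logb 2 ((L.card:ℝ)/SL) ≤ Real.logb 2 (2*(n:ℝ)^2/SL) := by
        apply Real.logb_le_logb_of_le one_lt_two (div_pos hLne hpos)
        gcongr
      have hexp : Real.logb 2 (2*(n:ℝ)^2/SL)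
          = 1 + 2 * Real.logb 2 (n:ℝ) - Real.logb 2 SL := by
        rw [Real.logb_div (by positivity) hpos.ne',
          Real.logb_mul two_ne_zero (by positivity),
          Real.logb_self_eq_one one_lt_two]
        rw [show ((n:ℝ)^2) = (n:ℝ)^(2:ℕ) by norm_num, Real.logb_pow]
        push_cast; ring
      have hkey2 : SL * Real.logb 2 (n:ℝ) - SL * Real.logb 2 SL
          ≤ ((n:ℝ) - SL)/Real.log 2 := by
        have h1 : SL * Real.log (n:ℝ) - SL * Real.log SL ≤ (n:ℝ) - SL := by
          have h2 := Real.log_le_sub_one_of_pos (div_pos hnR hpos)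
          rw [Real.log_div hnR.ne' hpos.ne'] at h2
          calc SL * Real.log (n:ℝ) - SL * Real.log SL
              = SL * (Real.log (n:ℝ) - Real.log SL) := by ring
            _ ≤ SL * ((n:ℝ)/SL - 1) := mul_le_mul_of_nonneg_left h2 hpos.le
            _ = (n:ℝ) - SL := by field_simp
        have conv : ∀ y : ℝ, Real.logb 2 y = Real.log y / Real.log 2 := fun y => rfl
        simp only [conv]
        calc SL * (Real.log (n:ℝ) / Real.log 2) - SL * (Real.log SL / Real.log 2)
            = (SL * Real.log (n:ℝ) - SL * Real.log SL) / Real.log 2 := by ring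
          _ ≤ ((n:ℝ) - SL)/Real.log 2 := by gcongr
      calc ∑ e ∈ L, x e * Real.logb 2 (1/x e)
          ≤ SL * Real.logb 2 ((L.card:ℝ)/SL) := hJ
        _ ≤ SL * Real.logb 2 (2*(n:ℝ)^2/SL) := mul_le_mul_of_nonneg_left hmono hpos.le
        _ = SL + 2 * (SL * Real.logb 2 (n:ℝ)) - SL * Real.logb 2 SL := by
            rw [hexp]; ring
        _ ≤ _ := by linarith [hkey2]
  -- combine
  have id1 : Real.logb 2 ((n:ℝ)/2) = Real.logb 2 (n:ℝ) - 1 := by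
    rw [Real.logb_div hnR.ne' two_ne_zero, Real.logb_self_eq_one one_lt_two]
  rw [id1] at hent
  rw [hsplitE] at hent
  have hprod : W * Real.logb 2 (n:ℝ) + SL * Real.logb 2 (n:ℝ)
      = (n:ℝ) * Real.logb 2 (n:ℝ) := by rw [← add_mul, hWSL]
  have hdiv : ((n:ℝ) - SL)/Real.log 2 ≤ (3/2) * ((n:ℝ) - SL) := by
    rw [div_le_iff₀ hlog2]
    have hlog23 : (2:ℝ)/3 ≤ Real.log 2 := by nlinarith [Real.log_two_gt_d9]
    nlinarith [hW0, hWSL]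
  rw [le_div_iff₀ hlogb]
  have hid : (n:ℝ)*(Real.logb 2 (n:ℝ) - 1) = (n:ℝ)*Real.logb 2 (n:ℝ) - (n:ℝ) := by ring
  linarith [hheavy, hlight, hent, hid, hprod, hdiv, hW0, hSL0, hWSL, hnR]
end

section
/- Let G be a graph with an edge weighting x: E(G) → ℝ_{≥0}, and let vwuz be a 4-cycle in G with x_{vw}·x_{uz} ≥ x_{wu}·x_{zv}. Let α > 0 and define an edge weighting x̃ by x̃_e := x_e for e ∉ {vw, wu, uz, zv}, x̃_{vw} := x_{vw} - α, x̃_{uz} := x_{uz} - α, x̃_{wu} := x_{wu} + α, x̃_{zv} := x_{zv} + α, where all four modified weights lie in [0,1]. If x̃_{vw}·x̃_{uz} ≥ x̃_{wu}·x̃_{zv}, then h(x̃) ≥ h(x). Moreover, if x is a perfect fractional matching then so is x̃. -/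
open Finset

open Real in
lemma four_cycle_key {a b c d α : ℝ} (hα : 0 < α) (hb : 0 ≤ b) (hc : 0 ≤ c)
    (ha : α ≤ a) (hd : α ≤ d)
    (hprod : (b + α) * (c + α) ≤ (a - α) * (d - α)) :
    negMulLog a + negMulLog b + negMulLog c + negMulLog d ≤
      negMulLog (a - α) + negMulLog (b + α) + negMulLog (c + α) + negMulLog (d - α) := by
  set F : ℝ → ℝ := fun t =>
    negMulLog (a - t) + negMulLog (b + t) + negMulLog (c + t) + negMulLog (d - t) with hF
  have key : ∀ t ∈ Set.Ioo (0 : ℝ) α,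
      HasDerivAt F (log (a - t) + log (d - t) - log (b + t) - log (c + t)) t := by
    intro t ht
    have hat : 0 < a - t := by nlinarith [ht.2]
    have hdt : 0 < d - t := by nlinarith [ht.2]
    have hbt : 0 < b + t := by nlinarith [ht.1]
    have hct : 0 < c + t := by nlinarith [ht.1]
    have hA : HasDerivAt (fun s => negMulLog (a - s)) (log (a - t) + 1) t := by
      have := (hasDerivAt_negMulLog hat.ne').comp t ((hasDerivAt_id t).const_sub a)
      exact this.congr_deriv (by ring)
    have hB : HasDerivAt (fun s => negMulLog (b + s)) (-log (b + t) - 1) t := by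
      have := (hasDerivAt_negMulLog hbt.ne').comp t ((hasDerivAt_id t).const_add b)
      exact this.congr_deriv (by ring)
    have hC : HasDerivAt (fun s => negMulLog (c + s)) (-log (c + t) - 1) t := by
      have := (hasDerivAt_negMulLog hct.ne').comp t ((hasDerivAt_id t).const_add c)
      exact this.congr_deriv (by ring)
    have hD : HasDerivAt (fun s => negMulLog (d - s)) (log (d - t) + 1) t := by
      have := (hasDerivAt_negMulLog hdt.ne').comp t ((hasDerivAt_id t).const_sub d)
      exact this.congr_deriv (by ring)
    have := ((hA.add hB).add hC).add hD
    exact this.congr_deriv (by ring)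
  have hint : interior (Set.Icc (0 : ℝ) α) = Set.Ioo 0 α := interior_Icc
  have hcont : ContinuousOn F (Set.Icc 0 α) := by
    apply Continuous.continuousOn
    fun_prop
  have hdiff : DifferentiableOn ℝ F (interior (Set.Icc (0 : ℝ) α)) := by
    rw [hint]
    intro t ht
    exact (key t ht).differentiableAt.differentiableWithinAt
  have hderiv : ∀ t ∈ interior (Set.Icc (0 : ℝ) α), 0 ≤ deriv F t := by
    rw [hint]
    intro t ht
    rw [(key t ht).deriv]
    have hat : 0 < a - t := by nlinarith [ht.2]
    have hdt : 0 < d - t := by nlinarith [ht.2]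
    have hbt : 0 < b + t := by nlinarith [ht.1]
    have hct : 0 < c + t := by nlinarith [ht.1]
    have h1 : (b + t) * (c + t) ≤ (a - t) * (d - t) := by nlinarith [ht.1, ht.2]
    have := Real.log_le_log (by positivity) h1
    rw [Real.log_mul hbt.ne' hct.ne', Real.log_mul hat.ne' hdt.ne'] at this
    linarith
  have hmono := monotoneOn_of_deriv_nonneg (convex_Icc 0 α) hcont hdiff hderiv
  have := hmono (Set.left_mem_Icc.2 hα.le) (Set.right_mem_Icc.2 hα.le) hα.le
  simpa [hF] using this

lemma entropy_term_eq (t : ℝ) : t * Real.logb 2 (1 / t) = Real.negMulLog t / Real.log 2 := by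
  rw [Real.logb, Real.negMulLog, one_div, Real.log_inv]
  ring

/-- Redistributing weight along a 4-cycle `v w u z` (subtracting `α` on `vw, uz` and adding
`α` on `wu, zv`) does not decrease the entropy of an edge weighting, provided the product
condition `x̃_{vw} x̃_{uz} ≥ x̃_{wu} x̃_{zv}` still holds; moreover it preserves being a
perfect fractional matching. -/
theorem entropy_four_cycle_shift {V : Type*} [Fintype V] [DecidableEq V]
    (G : SimpleGraph V) [DecidableRel G.Adj]
    (x y : Sym2 V → ℝ) (hx0 : ∀ e, 0 ≤ x e)
    (v w u z : V)
    (hvw : G.Adj v w) (hwu : G.Adj w u) (huz : G.Adj u z) (hzv : G.Adj z v)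
    (hdist : ([v, w, u, z] : List V).Nodup)
    (α : ℝ) (hα : 0 < α)
    (hy : ∀ e : Sym2 V, e ≠ s(v, w) → e ≠ s(w, u) → e ≠ s(u, z) → e ≠ s(z, v) → y e = x e)
    (h1 : y s(v, w) = x s(v, w) - α) (h2 : y s(u, z) = x s(u, z) - α)
    (h3 : y s(w, u) = x s(w, u) + α) (h4 : y s(z, v) = x s(z, v) + α)
    (hrange : ∀ e ∈ ({s(v, w), s(w, u), s(u, z), s(z, v)} : Finset (Sym2 V)),
      0 ≤ y e ∧ y e ≤ 1)
    (hx4 : x s(w, u) * x s(z, v) ≤ x s(v, w) * x s(u, z))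
    (hy4 : y s(w, u) * y s(z, v) ≤ y s(v, w) * y s(u, z)) :
    (∑ e ∈ G.edgeFinset, x e * Real.logb 2 (1 / x e) ≤
      ∑ e ∈ G.edgeFinset, y e * Real.logb 2 (1 / y e)) ∧
    ((∀ v' : V, ∑ w' ∈ G.neighborFinset v', x s(v', w') = 1) →
      ∀ v' : V, ∑ w' ∈ G.neighborFinset v', y s(v', w') = 1) := by
  simp only [List.nodup_cons, List.mem_cons, List.mem_singleton, List.not_mem_nil,
    List.nodup_nil, or_false, not_or] at hdist
  have hvw' : v ≠ w := by tauto
  have hvu' : v ≠ u := by tauto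
  have hvz' : v ≠ z := by tauto
  have hwu' : w ≠ u := by tauto
  have hwz' : w ≠ z := by tauto
  have huz' : u ≠ z := by tauto
  -- disequalities among the four edges
  have e12 : s(v, w) ≠ s(w, u) := by simp only [ne_eq, Sym2.eq_iff]; tauto
  have e13 : s(v, w) ≠ s(u, z) := by simp only [ne_eq, Sym2.eq_iff]; tauto
  have e14 : s(v, w) ≠ s(z, v) := by simp only [ne_eq, Sym2.eq_iff]; tauto
  have e23 : s(w, u) ≠ s(u, z) := by simp only [ne_eq, Sym2.eq_iff]; tauto
  have e24 : s(w, u) ≠ s(z, v) := by simp only [ne_eq, Sym2.eq_iff]; tauto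
  have e34 : s(u, z) ≠ s(z, v) := by simp only [ne_eq, Sym2.eq_iff]; tauto
  set S : Finset (Sym2 V) := {s(v, w), s(w, u), s(u, z), s(z, v)} with hS
  have hsum4 : ∀ f : Sym2 V → ℝ,
      ∑ e ∈ S, f e = f s(v, w) + f s(w, u) + f s(u, z) + f s(z, v) := by
    intro f
    rw [hS, Finset.sum_insert (by simp [e12, e13, e14]),
      Finset.sum_insert (by simp [e23, e24]), Finset.sum_insert (by simp [e34]),
      Finset.sum_singleton]
    ring
  have hSsub : S ⊆ G.edgeFinset := by
    intro e he
    rw [hS] at he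
    simp only [Finset.mem_insert, Finset.mem_singleton] at he
    rcases he with rfl | rfl | rfl | rfl <;>
      simp [SimpleGraph.mem_edgeFinset, hvw, hwu, huz, hzv]
  have hcompl : ∀ e ∈ G.edgeFinset \ S, y e = x e := by
    intro e he
    rw [Finset.mem_sdiff, hS] at he
    simp only [Finset.mem_insert, Finset.mem_singleton, not_or] at he
    exact hy e he.2.1 he.2.2.1 he.2.2.2.1 he.2.2.2.2
  constructor
  · -- entropy inequality
    have hlog2 : (0 : ℝ) < Real.log 2 := Real.log_pos one_lt_two
    have key : ∑ e ∈ G.edgeFinset, Real.negMulLog (x e) ≤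
        ∑ e ∈ G.edgeFinset, Real.negMulLog (y e) := by
      rw [← Finset.sum_sdiff hSsub, ← Finset.sum_sdiff hSsub]
      have hc : ∑ e ∈ G.edgeFinset \ S, Real.negMulLog (y e) =
          ∑ e ∈ G.edgeFinset \ S, Real.negMulLog (x e) :=
        Finset.sum_congr rfl fun e he => by rw [hcompl e he]
      rw [hc]
      refine add_le_add_right ?_ _
      rw [hsum4, hsum4]
      have hr1 := hrange s(v, w) (by simp [hS])
      have hr3 := hrange s(u, z) (by simp [hS])
      have ha : α ≤ x s(v, w) := by have := hr1.1; rw [h1] at this; linarith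
      have hd : α ≤ x s(u, z) := by have := hr3.1; rw [h2] at this; linarith
      have hprod : (x s(w, u) + α) * (x s(z, v) + α) ≤
          (x s(v, w) - α) * (x s(u, z) - α) := by
        rw [h1, h2, h3, h4] at hy4; linarith
      have := four_cycle_key hα (hx0 s(w, u)) (hx0 s(z, v)) ha hd hprod
      rw [h1, h2, h3, h4]
      linarith
    simp only [entropy_term_eq]
    rw [← Finset.sum_div, ← Finset.sum_div]
    exact (div_le_div_iff_of_pos_right hlog2).mpr key
  · -- perfect fractional matching preserved
    intro hpfm v'
    have hswap : ∀ (p q r : V), q ∈ G.neighborFinset p → r ∈ G.neighborFinset p → q ≠ r →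
        y s(p, q) = x s(p, q) - α → y s(p, r) = x s(p, r) + α →
        (∀ w' ∈ G.neighborFinset p, w' ≠ q → w' ≠ r → y s(p, w') = x s(p, w')) →
        ∑ w' ∈ G.neighborFinset p, y s(p, w') = 1 := by
      intro p q r hq hr hqr hyq hyr hother
      have hsub : ({q, r} : Finset V) ⊆ G.neighborFinset p := by
        intro t ht
        simp only [Finset.mem_insert, Finset.mem_singleton] at ht
        rcases ht with rfl | rfl <;> assumption
      rw [← Finset.sum_sdiff hsub]
      have := hpfm p
      rw [← Finset.sum_sdiff hsub] at this
      have hc : ∑ w' ∈ G.neighborFinset p \ {q, r}, y s(p, w') =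
          ∑ w' ∈ G.neighborFinset p \ {q, r}, x s(p, w') := by
        refine Finset.sum_congr rfl fun w' hw' => ?_
        rw [Finset.mem_sdiff, Finset.mem_insert, Finset.mem_singleton] at hw'
        push_neg at hw'
        exact hother w' hw'.1 hw'.2.1 hw'.2.2
      rw [hc, Finset.sum_pair hqr, hyq, hyr]
      rw [Finset.sum_pair hqr] at this
      linarith
    by_cases hv : v' = v
    · subst hv
      refine hswap v' w z (by simpa using hvw) (by simpa using hzv.symm) hwz' h1 ?_ ?_
      · rw [show s(v', z) = s(z, v') from Sym2.eq_swap]; exact h4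
      · intro w' _ hw hz
        refine hy _ ?_ ?_ ?_ ?_ <;> simp only [ne_eq, Sym2.eq_iff] <;> tauto
    · by_cases hw : v' = w
      · subst hw
        refine hswap v' v u (by simpa using hvw.symm) (by simpa using hwu) hvu' ?_ h3 ?_
        · rw [show s(v', v) = s(v, v') from Sym2.eq_swap]; exact h1
        · intro w' _ hv hu
          refine hy _ ?_ ?_ ?_ ?_ <;> simp only [ne_eq, Sym2.eq_iff] <;> tauto
      · by_cases hu : v' = u
        · subst hu
          refine hswap v' z w (by simpa using huz) (by simpa using hwu.symm) hwz'.symm h2 ?_ ?_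
          · rw [show s(v', w) = s(w, v') from Sym2.eq_swap]; exact h3
          · intro w' _ hz hw
            refine hy _ ?_ ?_ ?_ ?_ <;> simp only [ne_eq, Sym2.eq_iff] <;> tauto
        · by_cases hz : v' = z
          · subst hz
            refine hswap v' u v (by simpa using huz.symm) (by simpa using hzv) hvu'.symm ?_ h4 ?_
            · rw [show s(v', u) = s(u, v') from Sym2.eq_swap]; exact h2
            · intro w' _ hu hv
              refine hy _ ?_ ?_ ?_ ?_ <;> simp only [ne_eq, Sym2.eq_iff] <;> tauto
          · rw [show ∑ w' ∈ G.neighborFinset v', y s(v', w') =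
                ∑ w' ∈ G.neighborFinset v', x s(v', w') from
              Finset.sum_congr rfl fun w' _ => by
                refine hy _ ?_ ?_ ?_ ?_ <;> simp only [ne_eq, Sym2.eq_iff] <;> tauto]
            exact hpfm v'
end

section
/- Let (Z_t)_{t∈ℕ₀} be a Markov chain with finite state space {s_1,...,s_n} and transition matrices P^{(t)} = (p^{(t)}_{ij}) at time t. Suppose there is σ = (σ_i) with σ_i > 0 for all i, ∑_i σ_i = 1, and σP^{(t)} = σ for all t. Let α := inf over t,i,j,k of p^{(t)}_{ij}/σ_k and β := sup over t,i,j,k of p^{(t)}_{ij}/σ_k, and assume α > 0. Then for all t ≥ 2 + 2α⁻¹ log₂ β and all i, P[Z_t = s_i] = (1 ± (1 - α/2)^t)·σ_i. -/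
/-!
Write `r = 1 - α/2`. The bounds `α σ_j ≤ p_ij ≤ β σ_j` put one step of the chain within
`(β - α) σ` of `σ`. Afterwards each step contracts the deviation `μ - σ` by `1 - α`
relative to `σ`: since `μ - σ` has total mass zero, subtracting the minorising part
`α σ_j` from every row changes nothing, and what remains of the rows is a nonnegative
kernel of mass `1 - α` that still fixes `σ` up to that factor. Hence
`|μ_t - σ| ≤ (β - α)(1 - α)^(t-1) σ ≤ β r^(2t-2) σ`, and `β r^(t-2) ≤ 1` once
`t - 2 ≥ 2 α⁻¹ log₂ β` because `r ≤ exp (-α/2)` and `log β ≤ log₂ β`.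
-/

open Finset

namespace MarkovChainMixing

variable {ι : Type*} [Fintype ι]

lemma le_one_of_mul_le {σ q : ι → ℝ} {a : ℝ} (hσ : ∑ j, σ j = 1) (hq : ∑ j, q j = 1)
    (h : ∀ j, a * σ j ≤ q j) : a ≤ 1 := by
  calc a = ∑ j, a * σ j := by rw [← mul_sum, hσ, mul_one]
    _ ≤ ∑ j, q j := sum_le_sum fun j _ ↦ h j
    _ = 1 := hq

lemma one_le_of_le_mul {σ q : ι → ℝ} {b : ℝ} (hσ : ∑ j, σ j = 1) (hq : ∑ j, q j = 1)
    (h : ∀ j, q j ≤ b * σ j) : 1 ≤ b := by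
  calc 1 = ∑ j, q j := hq.symm
    _ ≤ ∑ j, b * σ j := sum_le_sum fun j _ ↦ h j
    _ = b := by rw [← mul_sum, hσ, mul_one]

lemma sum_sum_mul_eq_sum {Q : ι → ι → ℝ} (hQ : ∀ i, ∑ j, Q i j = 1) (ν : ι → ℝ) :
    ∑ j, ∑ i, ν i * Q i j = ∑ i, ν i := by
  rw [sum_comm]
  simp [← mul_sum, hQ]

lemma abs_sum_mul_sub_le_of_bounds {Q : ι → ι → ℝ} {σ ν : ι → ℝ} {α β : ℝ}
    (hν0 : ∀ i, 0 ≤ ν i) (hν1 : ∑ i, ν i = 1) (hα1 : α ≤ 1) (hβ1 : 1 ≤ β)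
    (hlow : ∀ i j, α * σ j ≤ Q i j) (hhigh : ∀ i j, Q i j ≤ β * σ j) (j : ι)
    (hσj : 0 ≤ σ j) :
    |∑ i, ν i * Q i j - σ j| ≤ (β - α) * σ j := by
  have hge : α * σ j ≤ ∑ i, ν i * Q i j := by
    calc α * σ j = ∑ i, ν i * (α * σ j) := by rw [← sum_mul, hν1, one_mul]
      _ ≤ ∑ i, ν i * Q i j := by gcongr with i; exacts [hν0 i, hlow i j]
  have hle : ∑ i, ν i * Q i j ≤ β * σ j := by
    calc ∑ i, ν i * Q i j ≤ ∑ i, ν i * (β * σ j) := by gcongr with i; exacts [hν0 i, hhigh i j]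
      _ = β * σ j := by rw [← sum_mul, hν1, one_mul]
  rw [abs_le]
  constructor <;> nlinarith

lemma abs_sum_mul_sub_le_mul_one_sub {Q : ι → ι → ℝ} {σ ν : ι → ℝ} {α c : ℝ}
    (hσ1 : ∑ i, σ i = 1) (hstat : ∀ j, ∑ i, σ i * Q i j = σ j)
    (hlow : ∀ i j, α * σ j ≤ Q i j) (hν1 : ∑ i, ν i = 1)
    (hc : ∀ i, |ν i - σ i| ≤ c * σ i) (j : ι) :
    |∑ i, ν i * Q i j - σ j| ≤ c * (1 - α) * σ j := by
  have hdecomp : ∑ i, ν i * Q i j - σ j = ∑ i, (ν i - σ i) * (Q i j - α * σ j) := by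
    simp only [sub_mul, mul_sub, sum_sub_distrib, ← sum_mul, hν1, hstat, hσ1]
    ring
  calc |∑ i, ν i * Q i j - σ j|
      ≤ ∑ i, |ν i - σ i| * (Q i j - α * σ j) := by
        rw [hdecomp]
        refine (abs_sum_le_sum_abs _ _).trans_eq (sum_congr rfl fun i _ ↦ ?_)
        rw [abs_mul, abs_of_nonneg (sub_nonneg.2 (hlow i j))]
    _ ≤ ∑ i, c * σ i * (Q i j - α * σ j) := by
        gcongr with i
        exacts [sub_nonneg.2 (hlow i j), hc i]
    _ = c * (1 - α) * σ j := by
        simp only [mul_sub, sum_sub_distrib, mul_assoc, ← mul_sum, ← sum_mul, hstat, hσ1]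
        ring

section Chain

variable {P : ℕ → ι → ι → ℝ} {σ : ι → ℝ} {μ : ℕ → ι → ℝ} {α β : ℝ}

lemma sum_eq_one (hP1 : ∀ t i, ∑ j, P t i j = 1) (hμ1 : ∑ i, μ 0 i = 1)
    (hμrec : ∀ t j, μ (t + 1) j = ∑ i, μ t i * P t i j) (t : ℕ) : ∑ i, μ t i = 1 := by
  induction t with
  | zero => exact hμ1
  | succ t ih => simp only [hμrec, sum_sum_mul_eq_sum (hP1 t), ih]

lemma abs_sub_le_pow (hP1 : ∀ t i, ∑ j, P t i j = 1)
    (hσ0 : ∀ i, 0 < σ i) (hσ1 : ∑ i, σ i = 1) (hstat : ∀ t j, ∑ i, σ i * P t i j = σ j)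
    (hα1 : α ≤ 1) (hβ1 : 1 ≤ β)
    (hlow : ∀ t i j, α * σ j ≤ P t i j) (hhigh : ∀ t i j, P t i j ≤ β * σ j)
    (hμ0 : ∀ i, 0 ≤ μ 0 i) (hμ1 : ∑ i, μ 0 i = 1)
    (hμrec : ∀ t j, μ (t + 1) j = ∑ i, μ t i * P t i j) (m : ℕ) (j : ι) :
    |μ (m + 1) j - σ j| ≤ (β - α) * (1 - α) ^ m * σ j := by
  induction m generalizing j with
  | zero =>
    simpa [hμrec] using
      abs_sum_mul_sub_le_of_bounds hμ0 hμ1 hα1 hβ1 (hlow 0) (hhigh 0) j (hσ0 j).le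
  | succ m ih =>
    rw [hμrec, pow_succ, ← mul_assoc]
    exact abs_sum_mul_sub_le_mul_one_sub hσ1 (hstat _) (hlow _)
      (sum_eq_one hP1 hμ1 hμrec _) ih j

end Chain

lemma mul_one_sub_half_pow_le_one {α β : ℝ} (hα0 : 0 < α) (hα2 : α ≤ 2) (hβ1 : 1 ≤ β)
    {m : ℕ} (hm : 2 * α⁻¹ * Real.logb 2 β ≤ m) : β * (1 - α / 2) ^ m ≤ 1 := by
  have hlog : Real.log β ≤ m * (α / 2) := by
    have hlogb : Real.log β ≤ Real.logb 2 β := by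
      rw [Real.logb, le_div_iff₀ (Real.log_pos one_lt_two)]
      exact mul_le_of_le_one_right (Real.log_nonneg hβ1) (Real.log_two_lt_d9.trans (by norm_num)).le
    have : Real.logb 2 β ≤ m * (α / 2) := by
      calc Real.logb 2 β = 2 * α⁻¹ * Real.logb 2 β * (α / 2) := by field_simp
        _ ≤ m * (α / 2) := by gcongr
    linarith
  have hpow : (1 - α / 2) ^ m ≤ β⁻¹ :=
    calc (1 - α / 2) ^ m ≤ Real.exp (-(α / 2)) ^ m := by
          gcongr
          · linarith
          · exact Real.one_sub_le_exp_neg _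
      _ = Real.exp (-(m * (α / 2))) := by rw [← Real.exp_nat_mul, mul_neg]
      _ ≤ Real.exp (-Real.log β) := by gcongr
      _ = β⁻¹ := by rw [Real.exp_neg, Real.exp_log (by linarith)]
  calc β * (1 - α / 2) ^ m ≤ β * β⁻¹ := by gcongr
    _ = 1 := mul_inv_cancel₀ (by linarith)

lemma sub_mul_one_sub_pow_le {α β : ℝ} (hα0 : 0 < α) (hα1 : α ≤ 1) (hβ1 : 1 ≤ β)
    {m : ℕ} (hm : 2 * α⁻¹ * Real.logb 2 β ≤ m) :
    (β - α) * (1 - α) ^ (m + 1) ≤ (1 - α / 2) ^ (m + 2) := by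
  have hsq : 1 - α ≤ (1 - α / 2) ^ 2 := by nlinarith
  calc (β - α) * (1 - α) ^ (m + 1) ≤ β * ((1 - α / 2) ^ 2) ^ (m + 1) := by
        gcongr
        · linarith
    _ = β * (1 - α / 2) ^ m * (1 - α / 2) ^ (m + 2) := by
        rw [← pow_mul, mul_assoc, ← pow_add]
        ring_nf
    _ ≤ (1 - α / 2) ^ (m + 2) :=
        mul_le_of_le_one_left (pow_nonneg (by linarith) _)
          (mul_one_sub_half_pow_le_one hα0 (by linarith) hβ1 hm)

end MarkovChainMixing

open MarkovChainMixing in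
theorem markov_chain_mixing_general {n : ℕ}
    (P : ℕ → Fin n → Fin n → ℝ)
    (hP1 : ∀ t i, ∑ j, P t i j = 1)
    (σ : Fin n → ℝ) (hσ0 : ∀ i, 0 < σ i) (hσ1 : ∑ i, σ i = 1)
    (hstat : ∀ t j, ∑ i, σ i * P t i j = σ j)
    (α β : ℝ) (hα : 0 < α)
    (hαle : ∀ t i j k, α ≤ P t i j / σ k)
    (hβge : ∀ t i j k, P t i j / σ k ≤ β)
    (μ : ℕ → Fin n → ℝ)
    (hμ0 : ∀ i, 0 ≤ μ 0 i) (hμ1 : ∑ i, μ 0 i = 1)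
    (hμrec : ∀ t j, μ (t + 1) j = ∑ i, μ t i * P t i j) :
    ∀ t : ℕ, 2 + 2 * α⁻¹ * Real.logb 2 β ≤ (t : ℝ) →
      ∀ i, |μ t i - σ i| ≤ (1 - α / 2) ^ t * σ i := by
  intro t ht i
  have hlow : ∀ t i j, α * σ j ≤ P t i j := fun t i j ↦ (le_div_iff₀ (hσ0 j)).1 (hαle t i j j)
  have hhigh : ∀ t i j, P t i j ≤ β * σ j := fun t i j ↦ (div_le_iff₀ (hσ0 j)).1 (hβge t i j j)
  have hα1 : α ≤ 1 := le_one_of_mul_le hσ1 (hP1 0 i) (hlow 0 i)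
  have hβ1 : 1 ≤ β := one_le_of_le_mul hσ1 (hP1 0 i) (hhigh 0 i)
  have hlogb : 0 ≤ 2 * α⁻¹ * Real.logb 2 β := by
    have := Real.logb_nonneg one_lt_two hβ1
    positivity
  have ht2 : 2 ≤ t := by exact_mod_cast (by linarith : (2 : ℝ) ≤ t)
  obtain ⟨m, rfl⟩ := Nat.exists_eq_add_of_le' ht2
  have hm : 2 * α⁻¹ * Real.logb 2 β ≤ m := by push_cast at ht; linarith
  calc |μ (m + 2) i - σ i| ≤ (β - α) * (1 - α) ^ (m + 1) * σ i :=
        abs_sub_le_pow hP1 hσ0 hσ1 hstat hα1 hβ1 hlow hhigh hμ0 hμ1 hμrec (m + 1) i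
    _ ≤ (1 - α / 2) ^ (m + 2) * σ i := by
        gcongr
        · exact (hσ0 i).le
        · exact sub_mul_one_sub_pow_le hα hα1 hβ1 hm

/-- Convergence of a (time-inhomogeneous) finite Markov chain.  The chain is encoded by
its transition matrices `P t` (row-stochastic) and the distributions `μ t` of `Z_t`
(`μ 0` is an arbitrary initial distribution, and `μ (t+1) j = ∑ i, μ t i * P t i j`).
If `σ` is a positive common stationary distribution and
`α ≤ P t i j / σ k ≤ β` for all `t, i, j, k` with `α > 0`, then for all
`t ≥ 2 + 2 α⁻¹ log₂ β` we have `P[Z_t = s_i] = (1 ± (1 - α/2)^t) σ_i`. -/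
theorem markov_chain_mixing {n : ℕ}
    (P : ℕ → Fin n → Fin n → ℝ)
    (hP0 : ∀ t i j, 0 ≤ P t i j) (hP1 : ∀ t i, ∑ j, P t i j = 1)
    (σ : Fin n → ℝ) (hσ0 : ∀ i, 0 < σ i) (hσ1 : ∑ i, σ i = 1)
    (hstat : ∀ t j, ∑ i, σ i * P t i j = σ j)
    (α β : ℝ) (hα : 0 < α)
    (hαle : ∀ t i j k, α ≤ P t i j / σ k)
    (hβge : ∀ t i j k, P t i j / σ k ≤ β)
    (μ : ℕ → Fin n → ℝ)
    (hμ0 : ∀ i, 0 ≤ μ 0 i) (hμ1 : ∑ i, μ 0 i = 1)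
    (hμrec : ∀ t j, μ (t + 1) j = ∑ i, μ t i * P t i j) :
    ∀ t : ℕ, 2 + 2 * α⁻¹ * Real.logb 2 β ≤ (t : ℝ) →
      ∀ i, |μ t i - σ i| ≤ (1 - α / 2) ^ t * σ i :=
  markov_chain_mixing_general P hP1 σ hσ0 hσ1 hstat α β hα hαle hβge μ hμ0 hμ1 hμrec
end

section
/- Suppose 1/n ≪ ε ≤ 1/2, G is a digraph on n vertices with minimum semidegree δ⁰(G) ≥ (1/2 + ε)n, x is a b-normal perfect fractional matching of G for some b ≥ 1, and (Z_t)_{t∈ℕ₀} is a random walk on G induced by x following the pattern of an oriented path L. Then for every vertex v and every t ≥ 5 + 4b²ε⁻¹ log₂ b, P[Z_t = v] = (1 ± e^{-εt/(2b²)})·(1/n). -/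
open Finset

set_option maxHeartbeats 2000000

/-- Mixing of a random walk induced by a `b`-normal perfect fractional matching on a
digraph of minimum semidegree at least `(1/2 + ε)n`, following the pattern of an oriented
path.  The hierarchy `1/n ≪ ε` is expressed by `∃ n₀, ∀ n ≥ n₀`.  The digraph is encoded
by its adjacency relation `A`; the pattern of the oriented path `L` is encoded by
`o : ℕ → Bool`, where `o t = true` iff `y_t y_{t+1} ∈ E(L)` (and `o t = false` iff
`y_{t+1} y_t ∈ E(L)`).  The walk is described by the distributions `μ t` of `Z_t`, where
`μ 0` is an arbitrary initial distribution.  The conclusion states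
`P[Z_t = v] = (1 ± e^{-εt/(2b²)}) / n` for all `t ≥ 5 + 4b²ε⁻¹ log₂ b`. -/
theorem random_walk_mixing :
    ∀ ε : ℝ, 0 < ε → ε ≤ 1 / 2 →
    ∃ n₀ : ℕ, ∀ (V : Type) [Fintype V]
      (A : V → V → Prop) [∀ v w, Decidable (A v w)] (n : ℕ),
      Fintype.card V = n → n₀ ≤ n →
      (∀ v : V, (1 / 2 + ε) * n ≤ ((Finset.univ.filter (fun w => A v w)).card : ℝ) ∧
        (1 / 2 + ε) * n ≤ ((Finset.univ.filter (fun w => A w v)).card : ℝ)) →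
      ∀ b : ℝ, 1 ≤ b →
      ∀ x : V → V → ℝ,
        (∀ v w, ¬ A v w → x v w = 0) →
        (∀ v w, A v w → 1 / (b * n) ≤ x v w ∧ x v w ≤ b / n) →
        (∀ v, ∑ w, x v w = 1) → (∀ v, ∑ w, x w v = 1) →
      ∀ o : ℕ → Bool,
      ∀ μ : ℕ → V → ℝ,
        (∀ v, 0 ≤ μ 0 v) → (∑ v, μ 0 v) = 1 →
        (∀ t v, μ (t + 1) v = ∑ u, μ t u * (if o t then x u v else x v u)) →
      ∀ t : ℕ, 5 + 4 * b ^ 2 * ε⁻¹ * Real.logb 2 b ≤ (t : ℝ) →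
      ∀ v : V, |μ t v - 1 / n| ≤ Real.exp (-(ε * t) / (2 * b ^ 2)) * (1 / n) := by
  intro ε hε hε2
  refine ⟨1, ?_⟩
  intro V _ A _ n hcard hn1 hdeg b hb x hx0 hxb hrow hcol o μ hμ0 hμsum hμrec t ht v
  classical
  have hb0 : (0:ℝ) < b := lt_of_lt_of_le one_pos hb
  have hn0 : (0:ℝ) < (n:ℝ) := by exact_mod_cast hn1
  have hV : (Finset.univ : Finset V).Nonempty := by
    rw [← Finset.card_pos, Finset.card_univ, hcard]; exact hn1
  -- basic bounds on x
  have hxnn : ∀ v w, 0 ≤ x v w := by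
    intro v w
    by_cases h : A v w
    · exact le_trans (by positivity) (hxb v w h).1
    · rw [hx0 v w h]
  have hxub : ∀ v w, x v w ≤ b / n := by
    intro v w
    by_cases h : A v w
    · exact (hxb v w h).2
    · rw [hx0 v w h]; positivity
  -- the transition matrix at time s
  have hMnn : ∀ s (u w : V), 0 ≤ (if o s then x u w else x w u) := by
    intro s u w; split
    · exact hxnn u w
    · exact hxnn w u
  have hMub : ∀ s (u w : V), (if o s then x u w else x w u) ≤ b / n := by
    intro s u w; split
    · exact hxub u w
    · exact hxub w u
  have hMcol : ∀ s (w : V), ∑ u, (if o s then x u w else x w u) = 1 := by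
    intro s w; split
    · exact hcol w
    · exact hrow w
  have hMrow : ∀ s (u : V), ∑ w, (if o s then x u w else x w u) = 1 := by
    intro s u; split
    · exact hrow u
    · exact hcol u
  -- overlap: for any two columns, the sum of minima is at least 2ε/b
  have key : ∀ (P Q : V → Prop) (_ : DecidablePred P) (_ : DecidablePred Q),
      (1 / 2 + ε) * n ≤ ((Finset.univ.filter P).card : ℝ) →
      (1 / 2 + ε) * n ≤ ((Finset.univ.filter Q).card : ℝ) →
      ∀ f g : V → ℝ, (∀ u, 0 ≤ min (f u) (g u)) →
      (∀ u, P u → Q u → 1 / (b * n) ≤ min (f u) (g u)) →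
      2 * ε / b ≤ ∑ u, min (f u) (g u) := by
    intro P Q _ _ hP hQ f g hnn hpq
    set S := Finset.univ.filter (fun u => P u ∧ Q u) with hS
    have hcardS : 2 * ε * n ≤ (S.card : ℝ) := by
      have h1 : (Finset.univ.filter P ∩ Finset.univ.filter Q).card
            + (Finset.univ.filter P ∪ Finset.univ.filter Q).card
          = (Finset.univ.filter P).card + (Finset.univ.filter Q).card :=
        Finset.card_inter_add_card_union _ _
      have h2 : ((Finset.univ.filter P ∪ Finset.univ.filter Q).card : ℝ) ≤ n := by
        have := Finset.card_le_univ (Finset.univ.filter P ∪ Finset.univ.filter Q)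
        rw [hcard] at this
        exact_mod_cast this
      have h3 : S = Finset.univ.filter P ∩ Finset.univ.filter Q := by
        rw [hS, Finset.filter_and]
      have h1' : ((S.card : ℝ)) + ((Finset.univ.filter P ∪ Finset.univ.filter Q).card : ℝ)
          = ((Finset.univ.filter P).card : ℝ) + ((Finset.univ.filter Q).card : ℝ) := by
        rw [h3]; exact_mod_cast h1
      nlinarith
    have hsub : ∑ u ∈ S, min (f u) (g u) ≤ ∑ u, min (f u) (g u) :=
      Finset.sum_le_sum_of_subset_of_nonneg (Finset.subset_univ S)
        (fun u _ _ => hnn u)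
    have hlow : (S.card : ℝ) * (1 / (b * n)) ≤ ∑ u ∈ S, min (f u) (g u) := by
      calc (S.card : ℝ) * (1 / (b * n)) = ∑ _u ∈ S, 1 / (b * n) := by
            rw [Finset.sum_const, nsmul_eq_mul]
        _ ≤ ∑ u ∈ S, min (f u) (g u) := by
            apply Finset.sum_le_sum
            intro u hu
            rw [hS, Finset.mem_filter] at hu
            exact hpq u hu.2.1 hu.2.2
    have hstart : 2 * ε / b ≤ (S.card : ℝ) * (1 / (b * n)) := by
      have e : 2 * ε / b = (2 * ε * n) * (1 / (b * n)) := by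
        field_simp
      rw [e]
      apply mul_le_mul_of_nonneg_right hcardS
      positivity
    linarith
  have hover : ∀ s (w w' : V),
      2 * ε / b ≤ ∑ u, min (if o s then x u w else x w u) (if o s then x u w' else x w' u) := by
    intro s w w'
    cases hs : o s with
    | true =>
      simp only [if_true]
      exact key (fun u => A u w) (fun u => A u w') _ _ (hdeg w).2 (hdeg w').2
        (fun u => x u w) (fun u => x u w')
        (fun u => le_min (hxnn u w) (hxnn u w'))
        (fun u h1 h2 => le_min (hxb u w h1).1 (hxb u w' h2).1)
    | false =>
      simp only [Bool.false_eq_true, if_false]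
      exact key (fun u => A w u) (fun u => A w' u) _ _ (hdeg w).1 (hdeg w').1
        (fun u => x w u) (fun u => x w' u)
        (fun u => le_min (hxnn w u) (hxnn w' u))
        (fun u h1 h2 => le_min (hxb w u h1).1 (hxb w' u h2).1)
  -- nonnegativity and total mass of μ
  have hμnn : ∀ s u, 0 ≤ μ s u := by
    intro s
    induction s with
    | zero => exact hμ0
    | succ k ih =>
      intro u
      rw [hμrec]
      exact Finset.sum_nonneg fun w _ => mul_nonneg (ih w) (hMnn k w u)
  have hμsum' : ∀ s, ∑ u, μ s u = 1 := by
    intro s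
    induction s with
    | zero => exact hμsum
    | succ k ih =>
      calc ∑ w, μ (k + 1) w = ∑ w, ∑ u, μ k u * (if o k then x u w else x w u) := by
            simp only [hμrec]
        _ = ∑ u, ∑ w, μ k u * (if o k then x u w else x w u) := Finset.sum_comm
        _ = ∑ u, μ k u * ∑ w, (if o k then x u w else x w u) := by
            simp only [Finset.mul_sum]
        _ = ∑ u, μ k u := by
            simp only [hMrow, mul_one]
        _ = 1 := ih
  -- one-step contraction of the oscillation
  have hcontr : ∀ s (D : ℝ), 0 ≤ D → (∀ w w', μ s w - μ s w' ≤ D) →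
      ∀ w w', μ (s + 1) w - μ (s + 1) w' ≤ (1 - 2 * ε / b) * D := by
    intro s D hD hstep w w'
    obtain ⟨u₀, -, hu₀⟩ := Finset.exists_min_image Finset.univ (μ s) hV
    have keyeq : μ (s + 1) w - μ (s + 1) w' =
        ∑ u, (μ s u - μ s u₀) *
          ((if o s then x u w else x w u) - (if o s then x u w' else x w' u)) := by
      have expand : ∀ u, (μ s u - μ s u₀) *
            ((if o s then x u w else x w u) - (if o s then x u w' else x w' u))
          = μ s u * (if o s then x u w else x w u)
            - μ s u * (if o s then x u w' else x w' u)
            - μ s u₀ * (if o s then x u w else x w u)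
            + μ s u₀ * (if o s then x u w' else x w' u) := by
        intro u; ring
      rw [hμrec, hμrec]
      simp only [expand, Finset.sum_add_distrib, Finset.sum_sub_distrib, ← Finset.mul_sum,
        hMcol s w, hMcol s w', mul_one]
      ring
    rw [keyeq]
    have step2 : ∑ u, (μ s u - μ s u₀) *
          ((if o s then x u w else x w u) - (if o s then x u w' else x w' u))
        ≤ ∑ u, D * ((if o s then x u w else x w u)
            - min (if o s then x u w else x w u) (if o s then x u w' else x w' u)) := by
      apply Finset.sum_le_sum
      intro u _
      have h0 : 0 ≤ μ s u - μ s u₀ := sub_nonneg.2 (hu₀ u (Finset.mem_univ u))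
      have h1 : μ s u - μ s u₀ ≤ D := hstep u u₀
      rcases min_cases (if o s then x u w else x w u) (if o s then x u w' else x w' u) with
        ⟨hm, hle⟩ | ⟨hm, hle⟩ <;> rw [hm] <;> nlinarith
    have step3 : ∑ u, D * ((if o s then x u w else x w u)
          - min (if o s then x u w else x w u) (if o s then x u w' else x w' u))
        = D * (1 - ∑ u, min (if o s then x u w else x w u) (if o s then x u w' else x w' u)) := by
      rw [← Finset.mul_sum, Finset.sum_sub_distrib, hMcol s w]
    have step4 : D * (1 - ∑ u, min (if o s then x u w else x w u)
          (if o s then x u w' else x w' u)) ≤ D * (1 - 2 * ε / b) := by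
      apply mul_le_mul_of_nonneg_left _ hD
      linarith [hover s w w']
    refine le_trans step2 ?_
    rw [step3]
    exact le_trans step4 (le_of_eq (mul_comm _ _))
  -- after one step the oscillation is at most b/n
  have hstep1 : ∀ w w', μ 1 w - μ 1 w' ≤ b / n := by
    intro w w'
    have h1 : μ 1 w ≤ b / n := by
      rw [hμrec]
      calc ∑ u, μ 0 u * (if o 0 then x u w else x w u)
          ≤ ∑ u, μ 0 u * (b / n) := by
            apply Finset.sum_le_sum
            intro u _
            exact mul_le_mul_of_nonneg_left (hMub 0 u w) (hμ0 u)
        _ = b / n := by rw [← Finset.sum_mul, hμsum, one_mul]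
    have h2 : 0 ≤ μ 1 w' := hμnn 1 w'
    linarith
  have hlam : 0 ≤ 1 - 2 * ε / b := by
    rw [sub_nonneg, div_le_one hb0]
    linarith
  -- iterated contraction
  have hosc : ∀ k (w w' : V), μ (k + 1) w - μ (k + 1) w' ≤ (b / n) * (1 - 2 * ε / b) ^ k := by
    intro k
    induction k with
    | zero => simpa using hstep1
    | succ m ih =>
      have hD : 0 ≤ (b / n) * (1 - 2 * ε / b) ^ m := by positivity
      intro w w'
      calc μ (m + 1 + 1) w - μ (m + 1 + 1) w'
          ≤ (1 - 2 * ε / b) * ((b / n) * (1 - 2 * ε / b) ^ m) := hcontr (m + 1) _ hD ih w w'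
        _ = (b / n) * (1 - 2 * ε / b) ^ (m + 1) := by ring
  -- t ≥ 5, so write t = k + 1
  have hlogb : 0 ≤ Real.logb 2 b := Real.logb_nonneg one_lt_two hb
  have hterm : 0 ≤ 4 * b ^ 2 * ε⁻¹ * Real.logb 2 b :=
    mul_nonneg (mul_nonneg (mul_nonneg (by norm_num) (sq_nonneg b)) (inv_nonneg.2 hε.le)) hlogb
  have ht5 : 5 ≤ t := by
    have h5 : (5:ℝ) ≤ (t:ℝ) := by linarith
    exact_mod_cast h5
  obtain ⟨k, rfl⟩ : ∃ k, t = k + 1 := ⟨t - 1, by omega⟩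
  have hD := hosc k
  -- the mean is between min and max
  have hminex : ∃ u, μ (k + 1) u ≤ 1 / n := by
    by_contra h
    push_neg at h
    have hlt : (1:ℝ) < 1 := by
      calc (1:ℝ) = ∑ _u : V, (1 / n : ℝ) := by
            rw [Finset.sum_const, Finset.card_univ, hcard, nsmul_eq_mul]
            field_simp
        _ < ∑ u, μ (k + 1) u := Finset.sum_lt_sum_of_nonempty hV (fun u _ => h u)
        _ = 1 := hμsum' (k + 1)
    exact lt_irrefl 1 hlt
  have hmaxex : ∃ u, 1 / n ≤ μ (k + 1) u := by
    by_contra h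
    push_neg at h
    have hlt : (1:ℝ) < 1 := by
      calc (1:ℝ) = ∑ u, μ (k + 1) u := (hμsum' (k + 1)).symm
        _ < ∑ _u : V, (1 / n : ℝ) := Finset.sum_lt_sum_of_nonempty hV (fun u _ => h u)
        _ = 1 := by
            rw [Finset.sum_const, Finset.card_univ, hcard, nsmul_eq_mul]
            field_simp
    exact lt_irrefl 1 hlt
  obtain ⟨a, ha⟩ := hminex
  obtain ⟨a', ha'⟩ := hmaxex
  have habs : |μ (k + 1) v - 1 / n| ≤ (b / n) * (1 - 2 * ε / b) ^ k := by
    rw [abs_le]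
    constructor
    · have := hD a' v
      linarith
    · have := hD v a
      linarith
  -- final numeric estimate
  have hfinal : (b / n) * (1 - 2 * ε / b) ^ k
      ≤ Real.exp (-(ε * ((k:ℝ) + 1)) / (2 * b ^ 2)) * (1 / n) := by
    have hbn : (b / n) * (1 - 2 * ε / b) ^ k = (b * (1 - 2 * ε / b) ^ k) * (1 / n) := by
      ring
    rw [hbn]
    apply mul_le_mul_of_nonneg_right _ (by positivity)
    -- b * λ^k ≤ exp(-(ε(k+1))/(2b²))
    have s1 : (1 - 2 * ε / b) ≤ Real.exp (-(2 * ε / b)) := by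
      have := Real.add_one_le_exp (-(2 * ε / b))
      linarith
    have s2 : (1 - 2 * ε / b) ^ k ≤ Real.exp (-(2 * ε / b)) ^ k :=
      pow_le_pow_left₀ hlam s1 k
    have s3 : Real.exp (-(2 * ε / b)) ^ k = Real.exp ((k:ℝ) * (-(2 * ε / b))) :=
      (Real.exp_nat_mul _ k).symm
    have s4 : b * (1 - 2 * ε / b) ^ k ≤ Real.exp (Real.log b + (k:ℝ) * (-(2 * ε / b))) := by
      rw [Real.exp_add, ← s3, Real.exp_log hb0]
      exact mul_le_mul_of_nonneg_left s2 hb0.le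
    refine le_trans s4 (Real.exp_le_exp.2 ?_)
    -- exponent inequality
    set L := Real.log b with hLdef
    set l2 := Real.log 2 with hl2def
    have hL : 0 ≤ L := Real.log_nonneg hb
    have hl2a : (0.6931471803:ℝ) < l2 := Real.log_two_gt_d9
    have hl2b : l2 < 0.6931471808 := Real.log_two_lt_d9
    have hl2pos : 0 < l2 := by linarith
    have hlogb2 : Real.logb 2 b = L / l2 := rfl
    rw [hlogb2] at ht
    have hT : (0:ℝ) < (k:ℝ) + 1 := by positivity
    have htR : 5 + 4 * b ^ 2 * ε⁻¹ * (L / l2) ≤ (k:ℝ) + 1 := by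
      push_cast at ht
      linarith
    have H : 5 * ε * l2 + 4 * b ^ 2 * L ≤ ε * l2 * ((k:ℝ) + 1) := by
      have h := mul_le_mul_of_nonneg_left htR (le_of_lt (mul_pos hε hl2pos))
      have e : ε * l2 * (5 + 4 * b ^ 2 * ε⁻¹ * (L / l2)) = 5 * ε * l2 + 4 * b ^ 2 * L := by
        field_simp
      linarith [h, e.symm.le, e.le]
    -- now the polynomial inequality
    have h2b2 : (0:ℝ) < 2 * b ^ 2 := by positivity
    have G' : (L + (k:ℝ) * (-(2 * ε / b))) * (2 * b ^ 2)
        ≤ (-(ε * ((k:ℝ) + 1)) / (2 * b ^ 2)) * (2 * b ^ 2) := by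
      have e1 : (L + (k:ℝ) * (-(2 * ε / b))) * (2 * b ^ 2)
          = 2 * b ^ 2 * L - 4 * ε * (k:ℝ) * b := by
        field_simp
        ring
      have e2 : (-(ε * ((k:ℝ) + 1)) / (2 * b ^ 2)) * (2 * b ^ 2) = -(ε * ((k:ℝ) + 1)) := by
        field_simp
      rw [e1, e2]
      have hK0 : 0 ≤ ε * (k:ℝ) := mul_nonneg hε.le (Nat.cast_nonneg k)
      have h5' : 4*ε*l2 + 4*b^2*L ≤ ε*l2*(k:ℝ) := by nlinarith [H]
      have h6 : 4*ε*l2 + 4*b^2*L ≤ ε*(k:ℝ) := by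
        have hml : 0 ≤ ε * (k:ℝ) * (1 - l2) := mul_nonneg hK0 (by linarith)
        nlinarith [h5', hml]
      have h7 : ε ≤ 2*ε*l2 := by nlinarith [hl2a, hε]
      have hfin : (4*ε*l2 + 4*b^2*L) * (4*b - 1) ≤ ε*(k:ℝ)*(4*b-1) :=
        mul_le_mul_of_nonneg_right h6 (by linarith)
      have hpos4 : 0 ≤ 4*ε*l2 + 4*b^2*L := by nlinarith [hL, hε.le, hl2a, sq_nonneg b]
      have hfin2 : (4*ε*l2 + 4*b^2*L) * 3 ≤ (4*ε*l2 + 4*b^2*L) * (4*b-1) := by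
        nlinarith [hpos4, hb]
      nlinarith [hfin, hfin2, h7, mul_nonneg (sq_nonneg b) hL, hε.le]
    exact le_of_mul_le_mul_right G' h2b2
  calc |μ (k + 1) v - 1 / n| ≤ (b / n) * (1 - 2 * ε / b) ^ k := habs
    _ ≤ Real.exp (-(ε * ((k:ℝ) + 1)) / (2 * b ^ 2)) * (1 / n) := hfinal
    _ = Real.exp (-(ε * ((k + 1 : ℕ) : ℝ)) / (2 * b ^ 2)) * (1 / n) := by push_cast; ring_nf
end

section
/- Let n, Δ ≥ 2 and n ≥ t ≥ 1. For any rooted tree (T, r) on n vertices with maximum degree Δ(T) ≤ Δ, there exists a collection (T_1, t_1),...,(T_k, t_k) of pairwise vertex-disjoint rooted subtrees of T such that: (i) V(T) = ∪_{i=1}^k V(T_i); (ii) T_i ⊆ T(t_i) for every i; (iii) the depth of t_1,...,t_k is non-decreasing; and (iv) t ≤ |T_i| ≤ 2Δt for every i ∈ [k]. -/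
/-!
Pick `v` minimising `|T(v)|` among the vertices with `|T(v)| ≥ t`. Every child subtree of `v`
then has fewer than `t` vertices, so `|T(v)| ≤ 1 + Δ(t - 1) ≤ Δt`. Removing `T(v)` leaves a
tree rooted at `r`; repeat while more than `2Δt` vertices remain (so that at least `t` survive
each cut) and keep the rest as the last piece. Finally sort the pieces by the depth of their roots.
-/

open Finset

section

open Function

variable {V : Type*}

def IsDescendant (par : V → V) (u v : V) : Prop := ∃ j, par^[j] u = v

namespace IsDescendant

variable {par : V → V} {r u v w : V}

protected lemma refl (par : V → V) (u : V) : IsDescendant par u u := ⟨0, rfl⟩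

lemma of_par_eq (h : par u = v) : IsDescendant par u v := ⟨1, h⟩

lemma trans (huv : IsDescendant par u v) (hvw : IsDescendant par v w) : IsDescendant par u w := by
  obtain ⟨i, rfl⟩ := huv
  obtain ⟨j, rfl⟩ := hvw
  exact ⟨j + i, iterate_add_apply par j i u⟩

lemma par_of_ne (huv : IsDescendant par u v) (hne : u ≠ v) : IsDescendant par (par u) v := by
  obtain ⟨_ | j, hj⟩ := huv
  · exact absurd hj hne
  · exact ⟨j, hj⟩

lemma mem_of_mapsTo {R : Set V} (hR : Set.MapsTo par R R) (huv : IsDescendant par u v)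
    (hu : u ∈ R) : v ∈ R := by
  obtain ⟨j, rfl⟩ := huv
  exact hR.iterate j hu

lemma exists_child (huv : IsDescendant par u v) (hne : u ≠ v) :
    ∃ c, c ≠ v ∧ par c = v ∧ IsDescendant par u c := by
  obtain ⟨j, hj⟩ := huv
  induction j generalizing u with
  | zero => exact absurd hj hne
  | succ j ih =>
    by_cases hpar : par u = v
    · exact ⟨u, hne, hpar, IsDescendant.refl par u⟩
    · obtain ⟨c, hcv, hcpar, hc⟩ := ih hpar hj
      exact ⟨c, hcv, hcpar, (of_par_eq rfl).trans hc⟩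

lemma eq_of_isPeriodicPt (hroot : par r = r) (hur : IsDescendant par u r) {p : ℕ} (hp : 0 < p)
    (hu : IsPeriodicPt par p u) : u = r := by
  obtain ⟨m, hm⟩ := hur
  have hle : m ≤ m * p := Nat.le_mul_of_pos_right m hp
  calc u = par^[m * p] u := ((hu.const_mul m).eq).symm
    _ = par^[m * p - m] (par^[m] u) := by rw [← iterate_add_apply, Nat.sub_add_cancel hle]
    _ = r := by rw [hm, iterate_fixed hroot]

lemma antisymm (hroot : par r = r) (hur : IsDescendant par u r) (huv : IsDescendant par u v)
    (hvu : IsDescendant par v u) : u = v := by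
  obtain ⟨i, hi⟩ := huv
  obtain ⟨j, hj⟩ := hvu
  rcases Nat.eq_zero_or_pos (j + i) with hzero | hpos
  · rwa [Nat.eq_zero_of_add_eq_zero_left hzero, iterate_zero_apply] at hi
  · have hcycle : IsPeriodicPt par (j + i) u := by
      rw [IsPeriodicPt, IsFixedPt, iterate_add_apply, hi, hj]
    obtain rfl := eq_of_isPeriodicPt hroot hur hpos hcycle
    rw [← hi, iterate_fixed hroot]

end IsDescendant

def IsRootedSubtree (par : V → V) (S : Finset V) (a : V) : Prop :=
  a ∈ S ∧ (∀ v ∈ S, v ≠ a → par v ∈ S) ∧ ∀ v ∈ S, IsDescendant par v a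

open scoped Classical in
noncomputable def subtreeIn (par : V → V) (R : Finset V) (v : V) : Finset V :=
  R.filter (IsDescendant par · v)

def children [Fintype V] [DecidableEq V] (par : V → V) (v : V) : Finset V :=
  univ.filter fun u => u ≠ v ∧ par u = v

section subtreeIn

variable {par : V → V} {r : V} {R : Finset V}

lemma mem_subtreeIn {u v : V} : u ∈ subtreeIn par R v ↔ u ∈ R ∧ IsDescendant par u v := by
  simp [subtreeIn]

lemma subtreeIn_subset (v : V) : subtreeIn par R v ⊆ R := fun _ hu => (mem_subtreeIn.1 hu).1

lemma subtreeIn_root (hacyc : ∀ v, IsDescendant par v r) : subtreeIn par R r = R :=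
  ext fun u => by simp [mem_subtreeIn, hacyc u]

lemma isRootedSubtree_subtreeIn (hR : Set.MapsTo par R R) {v : V} (hv : v ∈ R) :
    IsRootedSubtree par (subtreeIn par R v) v := by
  refine ⟨mem_subtreeIn.2 ⟨hv, .refl par v⟩, fun u hu hne => ?_,
    fun u hu => (mem_subtreeIn.1 hu).2⟩
  obtain ⟨huR, huv⟩ := mem_subtreeIn.1 hu
  exact mem_subtreeIn.2 ⟨hR huR, huv.par_of_ne hne⟩

lemma mem_of_mem_subtreeIn (hR : Set.MapsTo par R R) {u v : V} (hu : u ∈ subtreeIn par R v) :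
    v ∈ R :=
  (mem_subtreeIn.1 hu).2.mem_of_mapsTo hR (mem_subtreeIn.1 hu).1

lemma root_mem_of_mapsTo (hacyc : ∀ v, IsDescendant par v r) (hR : Set.MapsTo par R R)
    (hne : R.Nonempty) : r ∈ R := by
  obtain ⟨u, hu⟩ := hne
  exact (hacyc u).mem_of_mapsTo hR hu

variable [DecidableEq V]

lemma mapsTo_sdiff_subtreeIn (hR : Set.MapsTo par R R) (v : V) :
    Set.MapsTo par ↑(R \ subtreeIn par R v) ↑(R \ subtreeIn par R v) := by
  intro u hu
  simp only [coe_sdiff, Set.mem_sdiff, mem_coe, mem_subtreeIn, not_and] at hu ⊢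
  exact ⟨hR hu.1, fun _ hpar => hu.2 hu.1 ((IsDescendant.of_par_eq rfl).trans hpar)⟩

variable [Fintype V]

lemma subtreeIn_ssubset_of_mem_children (hroot : par r = r) (hacyc : ∀ v, IsDescendant par v r)
    {v c : V} (hv : v ∈ R) (hc : c ∈ children par v) :
    subtreeIn par R c ⊂ subtreeIn par R v := by
  obtain ⟨hcv, hcpar⟩ : c ≠ v ∧ par c = v := by simpa [children] using hc
  refine ssubset_of_subset_of_ne (fun u hu => ?_) fun heq => hcv ?_
  · obtain ⟨huR, huc⟩ := mem_subtreeIn.1 hu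
    exact mem_subtreeIn.2 ⟨huR, huc.trans (.of_par_eq hcpar)⟩
  · have hvc : v ∈ subtreeIn par R c := heq ▸ mem_subtreeIn.2 ⟨hv, .refl par v⟩
    exact IsDescendant.antisymm hroot (hacyc c) (.of_par_eq hcpar) (mem_subtreeIn.1 hvc).2

lemma subtreeIn_subset_insert_biUnion (v : V) :
    subtreeIn par R v ⊆ insert v ((children par v).biUnion (subtreeIn par R)) := by
  intro u hu
  obtain ⟨huR, huv⟩ := mem_subtreeIn.1 hu
  rcases eq_or_ne u v with rfl | hne
  · exact mem_insert_self u _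
  obtain ⟨c, hcv, hcpar, huc⟩ := huv.exists_child hne
  have hc : c ∈ children par v := by simp [children, hcv, hcpar]
  exact mem_insert_of_mem (mem_biUnion.2 ⟨c, hc, mem_subtreeIn.2 ⟨huR, huc⟩⟩)

lemma card_subtreeIn_le {Δ s : ℕ} (hdeg : ∀ v, #(children par v) ≤ Δ) (v : V)
    (hsmall : ∀ c ∈ children par v, #(subtreeIn par R c) ≤ s) :
    #(subtreeIn par R v) ≤ Δ * s + 1 :=
  calc #(subtreeIn par R v)
      ≤ #((children par v).biUnion (subtreeIn par R)) + 1 :=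
        (card_le_card (subtreeIn_subset_insert_biUnion v)).trans (card_insert_le _ _)
    _ ≤ ∑ c ∈ children par v, #(subtreeIn par R c) + 1 := by gcongr; exact card_biUnion_le
    _ ≤ #(children par v) * s + 1 := by gcongr; exact sum_le_card_nsmul _ _ _ hsmall
    _ ≤ Δ * s + 1 := by gcongr; exact hdeg v

lemma exists_subtreeIn_card_mem_Icc (hroot : par r = r) (hacyc : ∀ v, IsDescendant par v r)
    {Δ t : ℕ} (hdeg : ∀ v, #(children par v) ≤ Δ) (hΔ : 0 < Δ) (ht : 0 < t)
    (hR : Set.MapsTo par R R) (htR : t ≤ #R) :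
    ∃ v ∈ R, #(subtreeIn par R v) ∈ Set.Icc t (Δ * t) := by
  have hr : r ∈ R.filter (fun v => t ≤ #(subtreeIn par R v)) := by
    rw [mem_filter, subtreeIn_root hacyc]
    exact ⟨root_mem_of_mapsTo hacyc hR (card_pos.1 (ht.trans_le htR)), htR⟩
  obtain ⟨v, hv, hmin⟩ := exists_min_image _ (fun v => #(subtreeIn par R v)) ⟨r, hr⟩
  obtain ⟨hvR, hvt⟩ := mem_filter.1 hv
  obtain ⟨s, rfl⟩ : ∃ s, t = s + 1 := ⟨t - 1, by omega⟩
  have hsmall : ∀ c ∈ children par v, #(subtreeIn par R c) ≤ s := fun c hc => by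
    have hlt := card_lt_card (subtreeIn_ssubset_of_mem_children hroot hacyc hvR hc)
    by_contra! hge
    obtain ⟨u, hu⟩ := card_pos.1 (show 0 < #(subtreeIn par R c) by omega)
    exact (hmin c (mem_filter.2 ⟨mem_of_mem_subtreeIn hR hu, hge⟩)).not_gt hlt
  refine ⟨v, hvR, hvt, (card_subtreeIn_le hdeg v hsmall).trans ?_⟩
  rw [mul_add_one]
  omega

lemma exists_rootedSubtree_partition (hroot : par r = r) (hacyc : ∀ v, IsDescendant par v r)
    {Δ t : ℕ} (hdeg : ∀ v, #(children par v) ≤ Δ) (hΔ : 0 < Δ) (ht : 0 < t)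
    (R : Finset V) (hR : Set.MapsTo par R R) (htR : t ≤ #R) :
    ∃ (k : ℕ) (S : Fin k → Finset V) (a : Fin k → V),
      (∀ i, S i ⊆ R) ∧ (∀ v ∈ R, ∃ i, v ∈ S i) ∧ Pairwise (Disjoint on S) ∧
      ∀ i, IsRootedSubtree par (S i) (a i) ∧ t ≤ #(S i) ∧ #(S i) ≤ 2 * Δ * t := by
  induction R using Finset.strongInduction with
  | H R ih =>
  by_cases hsmall : #R ≤ 2 * Δ * t
  · have hrR := root_mem_of_mapsTo hacyc hR (card_pos.1 (by omega))
    refine ⟨1, fun _ => R, fun _ => r, fun _ => Subset.rfl, fun v hv => ⟨0, hv⟩,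
      fun i j hij => absurd (Subsingleton.elim i j) hij, fun _ => ⟨?_, htR, hsmall⟩⟩
    simpa only [subtreeIn_root hacyc] using isRootedSubtree_subtreeIn hR hrR
  obtain ⟨v, hvR, hvt, hvΔ⟩ := exists_subtreeIn_card_mem_Icc hroot hacyc hdeg hΔ ht hR htR
  set T := subtreeIn par R v
  have hTR : T ⊆ R := subtreeIn_subset v
  have hrest : t ≤ #(R \ T) := by
    have : t ≤ Δ * t := Nat.le_mul_of_pos_left t hΔ
    rw [card_sdiff_of_subset hTR]
    rw [mul_assoc] at hsmall
    omega
  obtain ⟨k, S, a, hsub, hcover, hdisj, hparts⟩ := ih (R \ T)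
    (sdiff_ssubset hTR (card_pos.1 (by omega))) (mapsTo_sdiff_subtreeIn hR v) hrest
  refine ⟨k + 1, Fin.cons T S, Fin.cons v a, ?_, fun u hu => ?_, ?_, ?_⟩
  · exact Fin.forall_fin_succ.2 ⟨hTR, fun i => (hsub i).trans sdiff_subset⟩
  · by_cases huT : u ∈ T
    · exact ⟨0, huT⟩
    · obtain ⟨i, hi⟩ := hcover u (mem_sdiff.2 ⟨hu, huT⟩)
      exact ⟨i.succ, hi⟩
  · have hT : ∀ i, Disjoint T (S i) := fun i => disjoint_of_subset_right (hsub i) disjoint_sdiff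
    exact pairwise_fin_succ_iff.2 ⟨fun i => (hT i).symm, hT, hdisj⟩
  · refine Fin.forall_fin_succ.2 ⟨⟨isRootedSubtree_subtreeIn hR hvR, hvt, ?_⟩, hparts⟩
    exact hvΔ.trans (by rw [mul_assoc]; omega)

end subtreeIn

end

theorem tree_partition_general {V : Type*} [Fintype V] [DecidableEq V]
    (n Δ t : ℕ) (hΔ : 2 ≤ Δ) (ht1 : 1 ≤ t) (htn : t ≤ n)
    (hcard : Fintype.card V = n)
    (r : V) (par : V → V) (hroot : par r = r)
    (hacyc : ∀ v : V, ∃ j : ℕ, par^[j] v = r)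
    (hdeg : ∀ v : V,
      (Finset.univ.filter (fun u => u ≠ v ∧ par u = v)).card
        + (if v = r then 0 else 1) ≤ Δ) :
    ∃ (k : ℕ) (S : Fin k → Finset V) (tt : Fin k → V),
      (∀ v : V, ∃ i, v ∈ S i) ∧
      (∀ i j, i ≠ j → Disjoint (S i) (S j)) ∧
      (∀ i, tt i ∈ S i) ∧
      (∀ i, ∀ v ∈ S i, v ≠ tt i → par v ∈ S i) ∧
      (∀ i, ∀ v ∈ S i, ∃ j : ℕ, par^[j] v = tt i) ∧
      (∀ i j, i ≤ j → Nat.find (hacyc (tt i)) ≤ Nat.find (hacyc (tt j))) ∧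
      (∀ i, t ≤ (S i).card ∧ (S i).card ≤ 2 * Δ * t) := by
  have hchildren : ∀ v, #(children par v) ≤ Δ := fun v => le_self_add.trans (hdeg v)
  obtain ⟨k, S, a, -, hcover, hdisj, hparts⟩ :=
    exists_rootedSubtree_partition hroot hacyc hchildren (by omega) ht1 univ
      (fun _ _ => mem_univ _) (by rwa [card_univ, hcard])
  let σ := Tuple.sort fun i => Nat.find (hacyc (a i))
  refine ⟨k, S ∘ σ, a ∘ σ, fun v => ?_, hdisj.comp_of_injective σ.injective,
    fun i => (hparts (σ i)).1.1, fun i => (hparts (σ i)).1.2.1, fun i => (hparts (σ i)).1.2.2,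
    fun i j hij => Tuple.monotone_sort (fun i => Nat.find (hacyc (a i))) hij,
    fun i => (hparts (σ i)).2⟩
  obtain ⟨i, hi⟩ := hcover v (mem_univ v)
  exact ⟨σ.symm i, by simpa using hi⟩

/-- Tree partition lemma (Proposition 6.5 of [JKKO:19]).  A rooted tree `(T, r)` on `n`
vertices with maximum degree at most `Δ` can be partitioned into pairwise disjoint rooted
subtrees `(T_1, t_1), …, (T_k, t_k)`, each of size between `t` and `2Δt`, with `T_i` lying
below its root `t_i` and the depths of the roots non-decreasing.

The rooted tree is encoded by its parent function `par` (with `par r = r`), so the subtree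
`T(v)` below a vertex `v` consists of the vertices `u` with `par^[j] u = v` for some `j`,
the depth of `v` is the least `j` with `par^[j] v = r`, and the degree of `v` is the number
of its children plus one (for the edge to its parent) unless `v = r`.  A rooted subtree
`(S, t)` is encoded by `t ∈ S` together with closure of `S \ {t}` under parents. -/
theorem tree_partition {V : Type*} [Fintype V] [DecidableEq V]
    (n Δ t : ℕ) (hn : 2 ≤ n) (hΔ : 2 ≤ Δ) (ht1 : 1 ≤ t) (htn : t ≤ n)
    (hcard : Fintype.card V = n)
    (r : V) (par : V → V) (hroot : par r = r)
    (hacyc : ∀ v : V, ∃ j : ℕ, par^[j] v = r)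
    (hdeg : ∀ v : V,
      (Finset.univ.filter (fun u => u ≠ v ∧ par u = v)).card
        + (if v = r then 0 else 1) ≤ Δ) :
    ∃ (k : ℕ) (S : Fin k → Finset V) (tt : Fin k → V),
      (∀ v : V, ∃ i, v ∈ S i) ∧
      (∀ i j, i ≠ j → Disjoint (S i) (S j)) ∧
      (∀ i, tt i ∈ S i) ∧
      (∀ i, ∀ v ∈ S i, v ≠ tt i → par v ∈ S i) ∧
      (∀ i, ∀ v ∈ S i, ∃ j : ℕ, par^[j] v = tt i) ∧
      (∀ i j, i ≤ j → Nat.find (hacyc (tt i)) ≤ Nat.find (hacyc (tt j))) ∧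
      (∀ i, t ≤ (S i).card ∧ (S i).card ≤ 2 * Δ * t) :=
  tree_partition_general n Δ t hΔ ht1 htn hcard r par hroot hacyc hdeg
end
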